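/- Affine invariance of static rigidity: let Φ(x) = Ax + b be an affine isomorphism of E^d. The map F = (f_i) ↦ (A f_i) carries equilibrium loads on P bijectively to equilibrium loads on Φ∘P, and resolvable loads bijectively to resolvable loads; in particular P is statically rigid iff Φ∘P is. -/

import Mathlib

/-! Under `p ↦ A p + b`, `f ↦ A f` the total force is multiplied by `A`, and the torque
matrix `T = ∑ (pᵢ fᵢᵀ - fᵢ pᵢᵀ)` becomes `A T Aᵀ` plus a term `b sᵀ - s bᵀ` in the new total
force `s`, which vanishes on equilibrium loads. The stress equation at each joint is simply
multiplied by `A`, because the translation cancels in `pⱼ - pᵢ`. Invertibility of `A` makes both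
correspondences two-sided, and since `F ↦ A F` is onto, static rigidity transfers. -/

open Matrix

/-- `F` is an equilibrium load on the framework `P`: total force and total torque vanish. -/
def IsEquilibriumLoad {V : Type*} [Fintype V] {d : ℕ} (P F : V → Fin d → ℝ) : Prop :=
  (∑ i, F i) = 0 ∧ ∀ k l, (∑ i, (P i k * F i l - F i k * P i l)) = 0

/-- `F` is resolvable on the framework `P` with edge set `Edge`. -/
def IsResolvableLoad {V : Type*} [Fintype V] {d : ℕ} (Edge : V → V → Prop)
    (P F : V → Fin d → ℝ) : Prop :=
  ∃ ω : V → V → ℝ, (∀ i j, ω i j = ω j i) ∧ (∀ i j, ¬ Edge i j → ω i j = 0) ∧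
    ∀ i, F i + ∑ j, ω i j • (P j - P i) = 0

section Affine

variable {V n R : Type*} [Fintype V] [CommRing R]

def torque (P F : V → n → R) : Matrix n n R :=
  ∑ i, (vecMulVec (P i) (F i) - vecMulVec (F i) (P i))

theorem torque_add_const (P F : V → n → R) (b : n → R) :
    torque (fun i => P i + b) F
      = torque P F + (vecMulVec b (∑ i, F i) - vecMulVec (∑ i, F i) b) := by
  ext k l
  simp only [torque, Matrix.add_apply, Matrix.sub_apply, Matrix.sum_apply, vecMulVec_apply,
    Pi.add_apply, Finset.sum_apply, Finset.mul_sum, Finset.sum_mul, ← Finset.sum_sub_distrib,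
    ← Finset.sum_add_distrib]
  exact Finset.sum_congr rfl fun i _ => by ring

variable [Fintype n]

theorem torque_mulVec (A : Matrix n n R) (P F : V → n → R) :
    torque (fun i => A *ᵥ P i) (fun i => A *ᵥ F i) = A * torque P F * Aᵀ := by
  simp only [torque, Finset.mul_sum, Finset.sum_mul, Matrix.mul_sub, Matrix.sub_mul,
    mul_vecMulVec, vecMulVec_mul, vecMul_transpose]

theorem mulVec_add_sum_smul_sub (A : Matrix n n R) (b : n → R) (P : V → n → R) (f : n → R)
    (ω : V → R) (i : V) :
    A *ᵥ f + ∑ j, ω j • ((A *ᵥ P j + b) - (A *ᵥ P i + b))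
      = A *ᵥ (f + ∑ j, ω j • (P j - P i)) := by
  simp only [add_sub_add_right_eq_sub, ← mulVec_sub, ← mulVec_smul, ← Matrix.mulVec_sum,
    ← mulVec_add]

end Affine

section Loads

variable {V : Type*} [Fintype V] {d : ℕ}

theorem isEquilibriumLoad_iff_torque (P F : V → Fin d → ℝ) :
    IsEquilibriumLoad P F ↔ ∑ i, F i = 0 ∧ torque P F = 0 := by
  simp only [IsEquilibriumLoad, ← Matrix.ext_iff, torque, Matrix.sum_apply, Matrix.sub_apply,
    vecMulVec_apply, Matrix.zero_apply]

theorem isEquilibriumLoad_affine_iff {A : Matrix (Fin d) (Fin d) ℝ} (hA : IsUnit A)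
    (b : Fin d → ℝ) (P F : V → Fin d → ℝ) :
    IsEquilibriumLoad P F ↔ IsEquilibriumLoad (fun i => A *ᵥ P i + b) (fun i => A *ᵥ F i) := by
  have hforce : A *ᵥ ∑ i, F i = 0 ↔ ∑ i, F i = 0 :=
    (mulVec_injective_of_isUnit hA).eq_iff' (mulVec_zero A)
  have htorque : A * torque P F * Aᵀ = 0 ↔ torque P F = 0 := by
    rw [(A.isUnit_transpose.mpr hA).mul_left_eq_zero, hA.mul_right_eq_zero]
  rw [isEquilibriumLoad_iff_torque, isEquilibriumLoad_iff_torque, torque_add_const, torque_mulVec,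
    ← Matrix.mulVec_sum, hforce]
  refine and_congr_right fun hF => ?_
  rw [hF, mulVec_zero, vecMulVec_zero, zero_vecMulVec, sub_zero, add_zero, htorque]

theorem isResolvableLoad_affine_iff (Edge : V → V → Prop) {A : Matrix (Fin d) (Fin d) ℝ}
    (hA : Function.Injective A.mulVec) (b : Fin d → ℝ) (P F : V → Fin d → ℝ) :
    IsResolvableLoad Edge P F ↔
      IsResolvableLoad Edge (fun i => A *ᵥ P i + b) (fun i => A *ᵥ F i) := by
  unfold IsResolvableLoad
  refine exists_congr fun ω => and_congr_right' <| and_congr_right' <| forall_congr' fun i => ?_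
  rw [mulVec_add_sum_smul_sub, hA.eq_iff' (mulVec_zero A)]

end Loads

theorem affine_invariance_static_general {V : Type*} [Fintype V] {d : ℕ}
    (Edge : V → V → Prop)
    (P : V → Fin d → ℝ)
    (A : Matrix (Fin d) (Fin d) ℝ) (hA : IsUnit A.det) (b : Fin d → ℝ) :
    (∀ F : V → Fin d → ℝ, IsEquilibriumLoad P F ↔
      IsEquilibriumLoad (fun i => A.mulVec (P i) + b) (fun i => A.mulVec (F i))) ∧
    (∀ F : V → Fin d → ℝ, IsResolvableLoad Edge P F ↔
      IsResolvableLoad Edge (fun i => A.mulVec (P i) + b) (fun i => A.mulVec (F i))) ∧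
    ((∀ F, IsEquilibriumLoad P F → IsResolvableLoad Edge P F) ↔
      (∀ F, IsEquilibriumLoad (fun i => A.mulVec (P i) + b) F →
        IsResolvableLoad Edge (fun i => A.mulVec (P i) + b) F)) := by
  have hAunit : IsUnit A := (isUnit_iff_isUnit_det A).mpr hA
  have hinj : Function.Injective A.mulVec := mulVec_injective_of_isUnit hAunit
  have hsurj : Function.Surjective fun (F : V → Fin d → ℝ) i => A *ᵥ F i :=
    (LinearMap.surjective_of_injective (f := A.mulVecLin) hinj).comp_left
  have hequil := isEquilibriumLoad_affine_iff hAunit b P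
  have hres := isResolvableLoad_affine_iff Edge hinj b P
  refine ⟨hequil, hres, ?_⟩
  conv_rhs => rw [hsurj.forall]
  exact forall_congr' fun F => imp_congr (hequil F) (hres F)

/-- affine invariance of static rigidity: for an affine isomorphism
`Φ(x) = Ax + b`, the map `F ↦ A∘F` carries equilibrium loads on `P` bijectively to
equilibrium loads on `Φ∘P` and resolvable loads to resolvable loads; in particular
`P` is statically rigid iff `Φ∘P` is. -/
theorem affine_invariance_static {V : Type*} [Fintype V] {d : ℕ}
    (Edge : V → V → Prop)
    (P : V → Fin d → ℝ) (hP : ∀ i j, Edge i j → P i ≠ P j)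
    (A : Matrix (Fin d) (Fin d) ℝ) (hA : IsUnit A.det) (b : Fin d → ℝ) :
    (∀ F : V → Fin d → ℝ, IsEquilibriumLoad P F ↔
      IsEquilibriumLoad (fun i => A.mulVec (P i) + b) (fun i => A.mulVec (F i))) ∧
    (∀ F : V → Fin d → ℝ, IsResolvableLoad Edge P F ↔
      IsResolvableLoad Edge (fun i => A.mulVec (P i) + b) (fun i => A.mulVec (F i))) ∧
    ((∀ F, IsEquilibriumLoad P F → IsResolvableLoad Edge P F) ↔
      (∀ F, IsEquilibriumLoad (fun i => A.mulVec (P i) + b) F →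
        IsResolvableLoad Edge (fun i => A.mulVec (P i) + b) F)) :=
  affine_invariance_static_general Edge P A hA b
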